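/- arXiv:2209.00220 — 2 statements merged into one kernel-verified Lean document; each statement's English description precedes it below -/
import Mathlib

section
/- Let v1 and v2 be codes of lengths l1 and l2 respectively, let K ≥ max(l1, l2), and let m = min(l1, l2). Then pad_K(v1) < pad_K(v2) if and only if val_m(v1) < val_m(v2), or val_m(v1) = val_m(v2) and l1 < l2. Moreover, pad_K(v1) = pad_K(v2) if and only if val_m(v1) = val_m(v2) and l1 = l2. Consequently, for every comparison operator op ∈ {<, >, ≤, ≥, =, ≠}, the truth value of pad_K(v1) op pad_K(v2) is determined by the first m bytes of the two codes together with the comparison of their lengths. -/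
/-- A code: a nonempty finite sequence of bytes whose last byte is nonzero. -/
def IsCode (v : List ℕ) : Prop :=
  v ≠ [] ∧ (∀ b ∈ v, b < 256) ∧ v.getLast? ≠ some 0

/-- `padVal K v` = Σ_{j=1}^{l} v_j · 256^{K−j}, the `K`-byte zero-padded value. -/
def padVal (K : ℕ) (v : List ℕ) : ℕ :=
  ∑ j ∈ Finset.range v.length, v.getD j 0 * 256 ^ (K - 1 - j)

/-- `prefixVal m v` = Σ_{j=1}^{m} v_j · 256^{m−j}, the `m`-byte prefix value. -/
def prefixVal (m : ℕ) (v : List ℕ) : ℕ :=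
  ∑ j ∈ Finset.range m, v.getD j 0 * 256 ^ (m - 1 - j)

/-!
Cutting both codes after their first `m` bytes writes
`pad_K(vᵢ) = val_m(vᵢ) · 256^(K-m) + rᵢ` with `rᵢ < 256^(K-m)`, so padded values compare
lexicographically in `(val_m(vᵢ), rᵢ)`. The tail `rᵢ` is the padded value of the bytes after
position `m`; because a code ends in a nonzero byte, it vanishes exactly when `lᵢ = m`. As
`m = min l1 l2`, at least one tail is zero, so comparing the tails amounts to comparing the lengths.
-/

theorem mul_add_lt_mul_add_iff_lex {X a b s t : ℕ} (hs : s < X) (ht : t < X) :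
    a * X + s < b * X + t ↔ a < b ∨ a = b ∧ s < t := by
  constructor
  · intro h
    rcases lt_trichotomy a b with hab | rfl | hab
    · exact Or.inl hab
    · exact Or.inr ⟨rfl, by omega⟩
    · nlinarith
  · rintro (hab | ⟨rfl, hst⟩)
    · nlinarith
    · omega

theorem mul_add_eq_mul_add_iff {X a b s t : ℕ} (hs : s < X) (ht : t < X) :
    a * X + s = b * X + t ↔ a = b ∧ s = t := by
  have hlt := mul_add_lt_mul_add_iff_lex (a := a) (b := b) hs ht
  have hgt := mul_add_lt_mul_add_iff_lex (a := b) (b := a) ht hs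
  constructor
  · intro h
    omega
  · rintro ⟨rfl, rfl⟩
    rfl

theorem prefixVal_succ (v : List ℕ) (n : ℕ) :
    prefixVal (n + 1) v = 256 * prefixVal n v + v.getD n 0 := by
  simp only [prefixVal, Finset.sum_range_succ, Finset.mul_sum, Nat.add_sub_cancel, Nat.sub_self,
    pow_zero, mul_one]
  congr 1
  refine Finset.sum_congr rfl fun j hj => ?_
  rw [Finset.mem_range] at hj
  rw [show n - j = n - 1 - j + 1 by omega, pow_succ]
  ring

theorem getD_lt_of_forall_lt {v : List ℕ} {B : ℕ} (hv : ∀ b ∈ v, b < B) (hB : 0 < B)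
    (n : ℕ) :
    v.getD n 0 < B := by
  rcases Nat.lt_or_ge n v.length with h | h
  · rw [List.getD_eq_getElem _ _ h]
    exact hv _ (List.getElem_mem h)
  · rwa [List.getD_eq_default _ _ h]

theorem prefixVal_lt_pow {v : List ℕ} (hv : ∀ b ∈ v, b < 256) (n : ℕ) :
    prefixVal n v < 256 ^ n := by
  induction n with
  | zero => simp [prefixVal]
  | succ n ih =>
    have := getD_lt_of_forall_lt hv (by norm_num) n
    rw [prefixVal_succ, pow_succ]
    omega

theorem padVal_eq_prefixVal_mul {v : List ℕ} {K : ℕ} (hK : v.length ≤ K) :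
    padVal K v = prefixVal v.length v * 256 ^ (K - v.length) := by
  rw [padVal, prefixVal, Finset.sum_mul]
  refine Finset.sum_congr rfl fun j hj => ?_
  rw [Finset.mem_range] at hj
  rw [mul_assoc, ← pow_add]
  congr 2
  omega

theorem padVal_lt_pow {v : List ℕ} {K : ℕ} (hv : ∀ b ∈ v, b < 256) (hK : v.length ≤ K) :
    padVal K v < 256 ^ K := by
  rw [padVal_eq_prefixVal_mul hK]
  calc prefixVal v.length v * 256 ^ (K - v.length)
      < 256 ^ v.length * 256 ^ (K - v.length) := by
        gcongr
        exact prefixVal_lt_pow hv _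
    _ = 256 ^ K := by rw [← pow_add, Nat.add_sub_cancel' hK]

theorem padVal_pos {v : List ℕ} {K : ℕ} (hv : v ≠ []) (hlast : v.getLast? ≠ some 0) :
    0 < padVal K v := by
  have hlen : 0 < v.length := List.length_pos_iff.mpr hv
  have hlast' : v.getD (v.length - 1) 0 ≠ 0 := by
    simpa [List.getD_eq_getElem?_getD, ← List.getLast?_eq_getElem?,
      List.getLast?_eq_some_getLast hv] using hlast
  calc 0 < v.getD (v.length - 1) 0 * 256 ^ (K - 1 - (v.length - 1)) := by positivity
    _ ≤ padVal K v :=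
      Finset.single_le_sum (f := fun j => v.getD j 0 * 256 ^ (K - 1 - j))
        (fun _ _ => Nat.zero_le _) (Finset.mem_range.mpr (by omega))

theorem IsCode.drop {v : List ℕ} (hv : IsCode v) {m : ℕ} (hm : m < v.length) :
    IsCode (v.drop m) := by
  refine ⟨?_, fun b hb => hv.2.1 b (List.mem_of_mem_drop hb), ?_⟩
  · simpa [List.drop_eq_nil_iff] using hm
  · rw [List.getLast?_drop, if_neg (by omega)]
    exact hv.2.2

theorem padVal_eq_prefixVal_mul_add_padVal_drop {v : List ℕ} {m K : ℕ} (hm : m ≤ v.length)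
    (hK : m ≤ K) :
    padVal K v = prefixVal m v * 256 ^ (K - m) + padVal (K - m) (v.drop m) := by
  rw [padVal, ← Nat.add_sub_cancel' hm, Finset.sum_range_add, prefixVal, Finset.sum_mul, padVal,
    List.length_drop]
  congr 1
  · refine Finset.sum_congr rfl fun j hj => ?_
    rw [Finset.mem_range] at hj
    rw [mul_assoc, ← pow_add]
    congr 2
    omega
  · refine Finset.sum_congr rfl fun j hj => ?_
    simp only [List.getD_eq_getElem?_getD, List.getElem?_drop]
    congr 2
    omega

theorem padVal_drop_lt_pow {v : List ℕ} {m K : ℕ} (hv : ∀ b ∈ v, b < 256)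
    (hK : v.length ≤ K) :
    padVal (K - m) (v.drop m) < 256 ^ (K - m) :=
  padVal_lt_pow (fun b hb => hv b (List.mem_of_mem_drop hb))
    (by simp only [List.length_drop]; omega)

theorem IsCode.padVal_drop_eq_zero_iff {v : List ℕ} (hv : IsCode v) {m n : ℕ} :
    padVal n (v.drop m) = 0 ↔ v.length ≤ m := by
  constructor
  · intro h
    by_contra! hlt
    have := padVal_pos (K := n) (hv.drop hlt).1 (hv.drop hlt).2.2
    omega
  · intro h
    simp [List.drop_eq_nil_of_le h, padVal]

/-- Lemma 1: comparison of zero-padded codes is determined by the first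
`m = min l1 l2` bytes together with the comparison of the lengths;
this holds for every comparison operator `<, >, ≤, ≥, =, ≠`. -/
theorem padded_comparison_determined_by_min_prefix
    (v1 v2 : List ℕ) (hv1 : IsCode v1) (hv2 : IsCode v2)
    (l1 l2 m K : ℕ) (hl1 : l1 = v1.length) (hl2 : l2 = v2.length)
    (hm : m = min l1 l2) (hK : max l1 l2 ≤ K) :
    (padVal K v1 < padVal K v2 ↔
      (prefixVal m v1 < prefixVal m v2 ∨ (prefixVal m v1 = prefixVal m v2 ∧ l1 < l2))) ∧
    (padVal K v1 = padVal K v2 ↔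
      (prefixVal m v1 = prefixVal m v2 ∧ l1 = l2)) ∧
    (padVal K v1 > padVal K v2 ↔
      (prefixVal m v2 < prefixVal m v1 ∨ (prefixVal m v1 = prefixVal m v2 ∧ l2 < l1))) ∧
    (padVal K v1 ≤ padVal K v2 ↔
      (prefixVal m v1 < prefixVal m v2 ∨ (prefixVal m v1 = prefixVal m v2 ∧ l1 ≤ l2))) ∧
    (padVal K v1 ≥ padVal K v2 ↔
      (prefixVal m v2 < prefixVal m v1 ∨ (prefixVal m v1 = prefixVal m v2 ∧ l2 ≤ l1))) ∧
    (padVal K v1 ≠ padVal K v2 ↔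
      ¬(prefixVal m v1 = prefixVal m v2 ∧ l1 = l2)) := by
  subst hl1 hl2
  have hK1 : v1.length ≤ K := le_of_max_le_left hK
  have hK2 : v2.length ≤ K := le_of_max_le_right hK
  have hm1 : m ≤ v1.length := hm ▸ min_le_left _ _
  have hm2 : m ≤ v2.length := hm ▸ min_le_right _ _
  have split1 := padVal_eq_prefixVal_mul_add_padVal_drop hm1 (hm1.trans hK1)
  have split2 := padVal_eq_prefixVal_mul_add_padVal_drop hm2 (hm2.trans hK2)
  set r1 := padVal (K - m) (v1.drop m)
  set r2 := padVal (K - m) (v2.drop m)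
  have hr1 : r1 < 256 ^ (K - m) := padVal_drop_lt_pow hv1.2.1 hK1
  have hr2 : r2 < 256 ^ (K - m) := padVal_drop_lt_pow hv2.2.1 hK2
  have zero1 := hv1.padVal_drop_eq_zero_iff (m := m) (n := K - m)
  have zero2 := hv2.padVal_drop_eq_zero_iff (m := m) (n := K - m)
  have tail_lt : r1 < r2 ↔ v1.length < v2.length := by omega
  have tail_eq : r1 = r2 ↔ v1.length = v2.length := by omega
  have pad_lt : padVal K v1 < padVal K v2 ↔ prefixVal m v1 < prefixVal m v2 ∨
      prefixVal m v1 = prefixVal m v2 ∧ v1.length < v2.length := by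
    rw [split1, split2, mul_add_lt_mul_add_iff_lex hr1 hr2, tail_lt]
  have pad_eq : padVal K v1 = padVal K v2 ↔
      prefixVal m v1 = prefixVal m v2 ∧ v1.length = v2.length := by
    rw [split1, split2, mul_add_eq_mul_add_iff hr1 hr2, tail_eq]
  refine ⟨pad_lt, pad_eq, ?_, ?_, ?_, ?_⟩ <;> omega
end

section
/- Let c be a code of length l and v a code of length greater than l, with K at least the length of v. If the first l bytes of v equal the bytes of c (i.e., val_l(v) = val_l(c)), then pad_K(v) > pad_K(c). In particular, during a scan for the predicate v > c, upon finding that v's first l bytes equal c and that v has a further byte, the scan can conclude v passes the predicate without fetching v's remaining bytes, because the last byte of v is nonzero while c is padded with zeros. -/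
/-!
A zero-padded value splits as (value of the first `l` bytes) · 256^(K−l) plus the contribution
of the remaining bytes. For `c` the remainder is empty, so equal `l`-byte prefixes make the head
parts of `pad_K(v)` and `pad_K(c)` equal; for `v` the remainder contains the nonzero last byte of
`v`, so it is positive.
-/

open Finset

theorem prefixVal_mul_pow (w : List ℕ) {l K : ℕ} (hlK : l ≤ K) :
    prefixVal l w * 256 ^ (K - l) = ∑ j ∈ range l, w.getD j 0 * 256 ^ (K - 1 - j) := by
  rw [prefixVal, sum_mul]
  refine sum_congr rfl fun j hj => ?_
  rw [mul_assoc, ← pow_add]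
  congr 2
  have := mem_range.mp hj
  omega

theorem padVal_eq_prefixVal_mul_pow {w : List ℕ} {K : ℕ} (hK : w.length ≤ K) :
    padVal K w = prefixVal w.length w * 256 ^ (K - w.length) :=
  (prefixVal_mul_pow w hK).symm

theorem padVal_eq_prefixVal_mul_pow_add {w : List ℕ} {l K : ℕ} (hl : l ≤ w.length)
    (hK : w.length ≤ K) :
    padVal K w = prefixVal l w * 256 ^ (K - l) +
      ∑ j ∈ Ico l w.length, w.getD j 0 * 256 ^ (K - 1 - j) := by
  rw [prefixVal_mul_pow w (hl.trans hK), padVal, range_eq_Ico, range_eq_Ico,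
    sum_Ico_consecutive _ (Nat.zero_le l) hl]

theorem IsCode.getD_length_sub_one_ne_zero {v : List ℕ} (hv : IsCode v) :
    v.getD (v.length - 1) 0 ≠ 0 := by
  obtain ⟨hne, -, hlast⟩ := hv
  rw [List.getLast?_eq_some_getLast hne, List.getLast_eq_getElem] at hlast
  rw [List.getD_eq_getElem _ _ (by simpa [Nat.pos_iff_ne_zero] using hne)]
  simpa using hlast

theorem IsCode.prefixVal_mul_pow_lt_padVal {v : List ℕ} (hv : IsCode v) {l K : ℕ}
    (hl : l < v.length) (hK : v.length ≤ K) :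
    prefixVal l v * 256 ^ (K - l) < padVal K v := by
  have hlast_mem : v.length - 1 ∈ Ico l v.length := mem_Ico.mpr ⟨by omega, by omega⟩
  have htail : 0 < ∑ j ∈ Ico l v.length, v.getD j 0 * 256 ^ (K - 1 - j) :=
    calc 0 < v.getD (v.length - 1) 0 * 256 ^ (K - 1 - (v.length - 1)) :=
          Nat.pos_of_ne_zero (by simpa using hv.getD_length_sub_one_ne_zero)
      _ ≤ _ := single_le_sum (f := fun j => v.getD j 0 * 256 ^ (K - 1 - j))
          (fun _ _ => Nat.zero_le _) hlast_mem
  rw [padVal_eq_prefixVal_mul_pow_add hl.le hK]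
  omega

theorem longer_code_with_equal_prefix_gt_general
    (c v : List ℕ) (hv : IsCode v)
    (l K : ℕ) (hl : l = c.length) (hlt : l < v.length) (hK : v.length ≤ K)
    (hpre : prefixVal l v = prefixVal l c) :
    padVal K v > padVal K c := by
  subst hl
  calc padVal K c = prefixVal c.length v * 256 ^ (K - c.length) := by
        rw [padVal_eq_prefixVal_mul_pow (hlt.le.trans hK), hpre]
    _ < padVal K v := hv.prefixVal_mul_pow_lt_padVal hlt hK

/-- Early-stop claim of the PP-VBS scan: if the first `l` bytes of the longer code `v`
agree with the `l`-byte code `c`, then `pad_K(v) > pad_K(c)` — `v` passes the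
predicate `v > c` without fetching its remaining bytes. -/
theorem longer_code_with_equal_prefix_gt
    (c v : List ℕ) (hc : IsCode c) (hv : IsCode v)
    (l K : ℕ) (hl : l = c.length) (hlt : l < v.length) (hK : v.length ≤ K)
    (hpre : prefixVal l v = prefixVal l c) :
    padVal K v > padVal K c :=
  longer_code_with_equal_prefix_gt_general c v hv l K hl hlt hK hpre
end
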